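/- Let X_0, ..., X_{N-1} be i.i.d. with atomless distribution μ on ℝ, let J be the index of the maximum and x the value of the maximum. Conditioned on {J = j, X_J = x}, the remaining N-1 samples (X_n)_{n ≠ j} are i.i.d. with the conditional law of V given V ≤ x, where V ∼ μ. -/

import Mathlib

/-!
Almost surely the samples are pairwise distinct (two independent samples of an atomless law
tie with probability zero), so up to a null set the argmax is `j` exactly when `X i ≤ X j` for
all `i ≠ j`. The event is then the preimage under the sample vector of a set in `ℝ^N`, whose law
is the product `ν^N`; integrating out the coordinates `i ≠ j` first (Fubini) leaves, for
`X j = x`, the factor `∏_{i ≠ j} ν(A i ∩ (-∞, x])`.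
-/

open MeasureTheory ProbabilityTheory

theorem Fin.prod_univ_erase_eq_prod_succAbove {M : Type*} [CommMonoid M] {n : ℕ}
    (j : Fin (n + 1)) (f : Fin (n + 1) → M) :
    ∏ i ∈ Finset.univ.erase j, f i = ∏ i : Fin n, f (j.succAbove i) := by
  rw [← Finset.compl_singleton, ← Fin.image_succAbove_univ,
    Finset.prod_image fun _ _ _ _ h => j.succAbove_right_injective h]

theorem MeasureTheory.Measure.pi_setOf_mem_and_forall_ne {α : Type*} [MeasurableSpace α]
    (ν : Measure α) [SigmaFinite ν] {n : ℕ} (j : Fin (n + 1))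
    {B : Set α} (hB : MeasurableSet B)
    {R : Fin (n + 1) → Set (α × α)} (hR : ∀ i, MeasurableSet (R i)) :
    Measure.pi (fun _ => ν) {y | y j ∈ B ∧ ∀ i, i ≠ j → (y j, y i) ∈ R i}
      = ∫⁻ x in B, ∏ i ∈ Finset.univ.erase j, ν (Prod.mk x ⁻¹' R i) ∂ν := by
  set T : Set (α × (Fin n → α)) :=
    Prod.fst ⁻¹' B ∩ ⋂ i, {p | (p.1, p.2 i) ∈ R (j.succAbove i)}
  have hT : MeasurableSet T := by
    refine (measurable_fst hB).inter (MeasurableSet.iInter fun i => ?_)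
    exact measurable_fst.prodMk ((measurable_pi_apply i).comp measurable_snd) (hR _)
  have hpre : {y : Fin (n + 1) → α | y j ∈ B ∧ ∀ i, i ≠ j → (y j, y i) ∈ R i}
      = MeasurableEquiv.piFinSuccAbove (fun _ => α) j ⁻¹' T := by
    ext y
    simp [T, j.forall_iff_succAbove, Fin.succAbove_ne, Fin.removeNth]
  rw [hpre, (measurePreserving_piFinSuccAbove (fun _ => ν) j).measure_preimage
    hT.nullMeasurableSet, Measure.prod_apply hT, ← lintegral_indicator hB]
  refine lintegral_congr fun x => ?_
  by_cases hx : x ∈ B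
  · have hslice :
        Prod.mk x ⁻¹' T = Set.univ.pi fun i => Prod.mk x ⁻¹' R (j.succAbove i) := by
      ext z; simp [T, hx]
    simp [hslice, hx, Fin.prod_univ_erase_eq_prod_succAbove]
  · have hslice : Prod.mk x ⁻¹' T = ∅ := by
      ext z; simp [T, hx]
    simp [hslice, hx]

theorem ProbabilityTheory.IndepFun.measure_setOf_eq_eq_zero {Ω α : Type*} [MeasurableSpace Ω]
    [MeasurableSpace α] [MeasurableEq α] {μ : Measure Ω} [IsFiniteMeasure μ] {X Y : Ω → α}
    (hXY : IndepFun X Y μ) (hX : Measurable X) (hY : Measurable Y)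
    (hXatom : ∀ x, μ (X ⁻¹' {x}) = 0) :
    μ {ω | X ω = Y ω} = 0 := by
  have hdiag : MeasurableSet (Set.diagonal α) := measurableSet_diagonal
  have hslice : ∀ y, (fun x => (x, y)) ⁻¹' Set.diagonal α = {y} := fun y => by ext; simp
  rw [show {ω | X ω = Y ω} = (fun ω => (X ω, Y ω)) ⁻¹' Set.diagonal α from rfl,
    ← Measure.map_apply (hX.prodMk hY) hdiag,
    (indepFun_iff_map_prod_eq_prod_map_map hX.aemeasurable hY.aemeasurable).mp hXY,
    Measure.prod_apply_symm hdiag]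
  simp [hslice, Measure.map_apply hX (measurableSet_singleton _), hXatom]

theorem ProbabilityTheory.iIndepFun.ae_injective {Ω ι α : Type*} [MeasurableSpace Ω]
    [MeasurableSpace α] [MeasurableEq α] [Countable ι] {μ : Measure Ω} [IsFiniteMeasure μ]
    {X : ι → Ω → α} (hindep : iIndepFun X μ) (hmeas : ∀ i, Measurable (X i))
    (hatom : ∀ i x, μ (X i ⁻¹' {x}) = 0) :
    ∀ᵐ ω ∂μ, Function.Injective fun i => X i ω := by
  simp only [Function.Injective, ae_all_iff]
  intro i k
  by_cases hik : i = k
  · exact Filter.Eventually.of_forall fun _ _ => hik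
  · rw [ae_iff]
    simpa [hik] using
      (hindep.indepFun hik).measure_setOf_eq_eq_zero (hmeas i) (hmeas k) (hatom i)

theorem eq_iff_forall_ne_le_of_injective {ι α : Type*} [LinearOrder α] {y : ι → α}
    (hy : Function.Injective y) {k : ι} (hk : ∀ i, y i ≤ y k) (j : ι) :
    k = j ↔ ∀ i, i ≠ j → y i ≤ y j := by
  refine ⟨fun h i _ => h ▸ hk i, fun h => ?_⟩
  by_contra hkj
  exact hkj (hy ((hk j).antisymm' (h k hkj)))

theorem remaining_samples_truncated_iid_general
    {Ω : Type*} [MeasurableSpace Ω] (μ : Measure Ω) [IsProbabilityMeasure μ]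
    (N : ℕ)
    (X : Fin N → Ω → ℝ) (hmeas : ∀ i, Measurable (X i))
    (hindep : iIndepFun X μ)
    (ν : Measure ℝ) [IsProbabilityMeasure ν] [NullSingletonClass ν]
    (hid : ∀ i, Measure.map (X i) μ = ν)
    (J : Ω → Fin N) (hJ : ∀ ω i, X i ω ≤ X (J ω) ω)
    (j : Fin N) (B : Set ℝ) (hB : MeasurableSet B)
    (A : Fin N → Set ℝ) (hA : ∀ i, MeasurableSet (A i)) :
    (μ {ω | J ω = j ∧ X j ω ∈ B ∧ ∀ i, i ≠ j → X i ω ∈ A i}).toReal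
      = ∫ x in B, ∏ i ∈ Finset.univ.erase j, (ν (A i ∩ Set.Iic x)).toReal ∂ν := by
  obtain ⟨n, rfl⟩ : ∃ n, N = n + 1 := Nat.exists_eq_succ_of_ne_zero j.pos.ne'
  set R : Fin (n + 1) → Set (ℝ × ℝ) := fun i => {p | p.2 ∈ A i ∧ p.2 ≤ p.1}
  have hR : ∀ i, MeasurableSet (R i) := fun i =>
    (measurable_snd (hA i)).inter (measurableSet_le measurable_snd measurable_fst)
  set S := {y : Fin (n + 1) → ℝ | y j ∈ B ∧ ∀ i, i ≠ j → (y j, y i) ∈ R i}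
  have hS : MeasurableSet S := by measurability
  have hlaw : μ.map (fun ω i => X i ω) = Measure.pi fun _ => ν := by
    rw [hindep.map_fun_eq_pi_map fun i => (hmeas i).aemeasurable]
    simp only [hid]
  have hatom : ∀ i x, μ (X i ⁻¹' {x}) = 0 := fun i x => by
    rw [← Measure.map_apply (hmeas i) (measurableSet_singleton x), hid i, measure_singleton]
  have hevent : {ω | J ω = j ∧ X j ω ∈ B ∧ ∀ i, i ≠ j → X i ω ∈ A i}
      =ᵐ[μ] (fun ω i => X i ω) ⁻¹' S := by
    rw [Filter.eventuallyEq_set]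
    filter_upwards [hindep.ae_injective hmeas hatom] with ω hω
    simp only [Set.mem_preimage, Set.mem_ofPred_eq, S, R,
      eq_iff_forall_ne_le_of_injective hω (hJ ω) j, imp_and, forall_and]
    tauto
  have hslice : ∀ x i, Prod.mk x ⁻¹' R i = A i ∩ Set.Iic x := fun _ _ => rfl
  rw [measure_congr hevent, ← Measure.map_apply (measurable_pi_lambda _ hmeas) hS, hlaw,
    Measure.pi_setOf_mem_and_forall_ne ν j hB hR, ← integral_toReal
      (Finset.measurable_prod _ fun i _ => measurable_measure_prodMk_left (hR i)).aemeasurable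
      (ae_of_all _ fun x => ENNReal.prod_lt_top fun i _ => measure_lt_top ν _)]
  simp only [ENNReal.toReal_prod, hslice]

/-- for i.i.d. samples with atomless law `ν`, conditioned on the argmax being `j`
and on the maximal value `X_J = x`, the remaining `N-1` samples are i.i.d. with the law of
`V` given `V ≤ x`, `V ∼ ν`.  Since `{X_J = x}` has probability zero, this is expressed by
disintegration: for every measurable `B` and measurable targets `A i`,
`P(J = j, X_j ∈ B, ∀ i ≠ j : X i ∈ A i) = ∫_B ∏_{i ≠ j} ν(A i ∩ (-∞, x]) dν(x)`,
i.e. given `{J = j, X_J = x}` each remaining sample independently has law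
`ν(· ∩ (-∞, x]) / ν((-∞, x])` (whenever `ν((-∞, x]) > 0`). -/
theorem remaining_samples_truncated_iid
    {Ω : Type*} [MeasurableSpace Ω] (μ : Measure Ω) [IsProbabilityMeasure μ]
    (N : ℕ) (hN : 2 ≤ N)
    (X : Fin N → Ω → ℝ) (hmeas : ∀ i, Measurable (X i))
    (hindep : iIndepFun X μ)
    (ν : Measure ℝ) [IsProbabilityMeasure ν] [NullSingletonClass ν]
    (hid : ∀ i, Measure.map (X i) μ = ν)
    (J : Ω → Fin N) (hJ : ∀ ω i, X i ω ≤ X (J ω) ω)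
    (j : Fin N) (B : Set ℝ) (hB : MeasurableSet B)
    (A : Fin N → Set ℝ) (hA : ∀ i, MeasurableSet (A i)) :
    (μ {ω | J ω = j ∧ X j ω ∈ B ∧ ∀ i, i ≠ j → X i ω ∈ A i}).toReal
      = ∫ x in B, ∏ i ∈ Finset.univ.erase j, (ν (A i ∩ Set.Iic x)).toReal ∂ν :=
  remaining_samples_truncated_iid_general μ N X hmeas hindep ν hid J hJ j B hB A hA
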